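/- arXiv:2105.04292 — 2 statements merged into one kernel-verified Lean document; each statement's English description precedes it below -/
import Mathlib

section
/- Let G be a connected bipartite graph on which the Djoković–Winkler relation Θ is transitive (equivalently, by Winkler's theorem, G is a partial cube), and let F_1 and F_2 be two equivalence classes of Θ on the edge set of G. Then F_1 ∪ F_2 is an edge general position set of G. -/
open SimpleGraph

/-- A walk is a geodesic if its length equals the distance between its endpoints. -/
def IsGeodesic {V : Type*} (G : SimpleGraph V) {u v : V} (p : G.Walk u v) : Prop :=
  p.length = G.dist u v

/-- A set `S` of edges of `G` is an edge general position set if no geodesic of `G`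
contains three (distinct) edges of `S`. -/
def IsEdgeGPSet {V : Type*} (G : SimpleGraph V) (S : Set (Sym2 V)) : Prop :=
  S ⊆ G.edgeSet ∧
  ∀ ⦃u v : V⦄ (p : G.Walk u v), IsGeodesic G p →
    ∀ e₁ ∈ S, ∀ e₂ ∈ S, ∀ e₃ ∈ S,
      e₁ ∈ p.edges → e₂ ∈ p.edges → e₃ ∈ p.edges →
        e₁ = e₂ ∨ e₁ = e₃ ∨ e₂ = e₃

/-- The Djoković–Winkler relation `Θ` on the edges of `G`: edges `xy` and `uv` are related
iff `d(x,u) + d(y,v) ≠ d(x,v) + d(y,u)`. -/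
def DWRel {V : Type*} (G : SimpleGraph V) (e f : Sym2 V) : Prop :=
  e ∈ G.edgeSet ∧ f ∈ G.edgeSet ∧
    ∃ x y u v : V, e = s(x, y) ∧ f = s(u, v) ∧
      G.dist x u + G.dist y v ≠ G.dist x v + G.dist y u

/-- `DWRel` is symmetric. -/
lemma DWRel.symm' {V : Type*} {G : SimpleGraph V} {e f : Sym2 V} (h : DWRel G e f) :
    DWRel G f e := by
  obtain ⟨he, hf, x, y, u, v, hexy, hfuv, hne⟩ := h
  refine ⟨hf, he, u, v, x, y, hfuv, hexy, fun hc => hne ?_⟩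
  rw [G.dist_comm (u := x) (v := u), G.dist_comm (u := y) (v := v),
      G.dist_comm (u := x) (v := v), G.dist_comm (u := y) (v := u)]
  omega

/-- Distances between vertices of a walk are at most the index differences. -/
lemma dist_getVert_le {V : Type*} {G : SimpleGraph V} (hconn : G.Connected) :
    ∀ {a b : V} (p : G.Walk a b) (i j : ℕ), i ≤ j →
      G.dist (p.getVert i) (p.getVert j) ≤ j - i := by
  intro a b p
  induction p with
  | nil => intro i j _; simp [SimpleGraph.Walk.getVert, SimpleGraph.dist_self]
  | @cons a c b h q ih =>
    intro i j hij
    match i, j with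
    | 0, 0 => simp
    | 0, (j+1) =>
      have h0 : (SimpleGraph.Walk.cons h q).getVert 0 = a := by simp
      have h1 : (SimpleGraph.Walk.cons h q).getVert (j+1) = q.getVert j :=
        SimpleGraph.Walk.getVert_cons_succ q h
      rw [h0, h1]
      have htri : G.dist a (q.getVert j) ≤ G.dist a c + G.dist c (q.getVert j) :=
        hconn.dist_triangle
      have hac : G.dist a c ≤ 1 := by
        simpa using G.dist_le (SimpleGraph.Walk.cons h SimpleGraph.Walk.nil)
      have hq : G.dist c (q.getVert j) ≤ j := by
        simpa [q.getVert_zero] using ih 0 j (Nat.zero_le j)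
      omega
    | (i+1), (j+1) =>
      have := ih i j (by omega)
      simpa [SimpleGraph.Walk.getVert_cons_succ] using this

/-- On a geodesic, distances between vertices equal the index differences. -/
lemma dist_getVert_geodesic {V : Type*} {G : SimpleGraph V} (hconn : G.Connected)
    {a b : V} (p : G.Walk a b) (hgeo : IsGeodesic G p) (i j : ℕ) (hij : i ≤ j)
    (hj : j ≤ p.length) : G.dist (p.getVert i) (p.getVert j) = j - i := by
  have hle := dist_getVert_le hconn p i j hij
  have h1 : G.dist a (p.getVert i) ≤ i := by
    simpa [p.getVert_zero] using dist_getVert_le hconn p 0 i (Nat.zero_le i)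
  have h2 : G.dist (p.getVert j) b ≤ p.length - j := by
    simpa [p.getVert_length] using dist_getVert_le hconn p j p.length hj
  have htri : G.dist a b ≤ G.dist a (p.getVert i) + G.dist (p.getVert i) (p.getVert j)
      + G.dist (p.getVert j) b := by
    calc G.dist a b ≤ G.dist a (p.getVert j) + G.dist (p.getVert j) b := hconn.dist_triangle
      _ ≤ G.dist a (p.getVert i) + G.dist (p.getVert i) (p.getVert j)
          + G.dist (p.getVert j) b := by
          have := hconn.dist_triangle (u := a) (v := p.getVert i) (w := p.getVert j)
          omega
  have hlen : p.length = G.dist a b := hgeo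
  omega

/-- Every edge of a walk is of the form `s(p.getVert i, p.getVert (i+1))`. -/
lemma edge_mem_walk_getVert {V : Type*} {G : SimpleGraph V} :
    ∀ {a b : V} (p : G.Walk a b) {e : Sym2 V}, e ∈ p.edges →
      ∃ i, i < p.length ∧ e = s(p.getVert i, p.getVert (i+1)) := by
  intro a b p
  induction p with
  | nil => intro e he; simp at he
  | @cons a c b h q ih =>
    intro e he
    rw [SimpleGraph.Walk.edges_cons, List.mem_cons] at he
    rcases he with he | he
    · exact ⟨0, by simp, by
        simpa [SimpleGraph.Walk.getVert_zero, SimpleGraph.Walk.getVert_cons_succ] using he⟩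
    · obtain ⟨i, hi, hei⟩ := ih he
      exact ⟨i + 1, by simpa using Nat.succ_lt_succ hi, by
        simpa [SimpleGraph.Walk.getVert_cons_succ] using hei⟩

/-- Distinct edges on a geodesic are never DW-related. -/
lemma not_dwRel_of_geodesic {V : Type*} {G : SimpleGraph V} (hconn : G.Connected)
    {a b : V} {p : G.Walk a b} (hgeo : IsGeodesic G p) {f g : Sym2 V}
    (hf : f ∈ p.edges) (hg : g ∈ p.edges) (hfg : f ≠ g) : ¬ DWRel G f g := by
  obtain ⟨i, hi, hfi⟩ := edge_mem_walk_getVert p hf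
  obtain ⟨j, hj, hgj⟩ := edge_mem_walk_getVert p hg
  -- wlog i < j
  wlog hij : i < j generalizing f g i j
  · have hji : j < i := by
      rcases Nat.lt_or_ge j i with h' | h'
      · exact h'
      · exfalso; apply hfg; rw [hfi, hgj]
        have : i = j := by omega
        rw [this]
    intro hrel
    exact this hg hf (Ne.symm hfg) j hj hgj i hi hfi hji hrel.symm'
  intro hrel
  obtain ⟨-, -, x, y, u, v, hfxy, hguv, hne⟩ := hrel
  rw [hfi] at hfxy
  rw [hgj] at hguv
  have key : ∀ k l, k ≤ l → l ≤ p.length →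
      G.dist (p.getVert k) (p.getVert l) = l - k := fun k l h1 h2 =>
    dist_getVert_geodesic hconn p hgeo k l h1 h2
  have dcomm : ∀ s t : V, G.dist s t = G.dist t s := fun s t => G.dist_comm
  have hfc := Sym2.eq_iff.mp hfxy.symm
  have hgc := Sym2.eq_iff.mp hguv.symm
  have d1 : G.dist (p.getVert i) (p.getVert j) = j - i := key i j (by omega) (by omega)
  have d2 : G.dist (p.getVert (i+1)) (p.getVert (j+1)) = j - i :=
    (key (i+1) (j+1) (by omega) (by omega)).trans (by omega)
  have d3 : G.dist (p.getVert i) (p.getVert (j+1)) = j + 1 - i :=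
    key i (j+1) (by omega) (by omega)
  have d4 : G.dist (p.getVert (i+1)) (p.getVert j) = j - i - 1 :=
    (key (i+1) j (by omega) (by omega)).trans (by omega)
  rcases hfc with ⟨hx, hy⟩ | ⟨hx, hy⟩ <;> rcases hgc with ⟨hu, hv⟩ | ⟨hu, hv⟩ <;>
    subst hx <;> subst hy <;> subst hu <;> subst hv <;>
    [skip; rw [dcomm y u, dcomm x v] at d1 d4; rw [dcomm u x, dcomm v y] at d1 d4;
     rw [dcomm x u, dcomm y v, dcomm y u, dcomm x v] at d1 d2 d3 d4] <;>
    omega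

/-- If `G` is a connected bipartite graph on which the Djoković–Winkler relation `Θ` is
transitive (i.e., `G` is a partial cube), then the union of two `Θ`-classes of `G` is an
edge general position set of `G`. -/
theorem union_two_theta_classes_isEdgeGPSet {V : Type*} (G : SimpleGraph V)
    (hconn : G.Connected) (hbip : G.Colorable 2) (htrans : Transitive (DWRel G))
    (e₁ e₂ : Sym2 V) (he₁ : e₁ ∈ G.edgeSet) (he₂ : e₂ ∈ G.edgeSet) :
    IsEdgeGPSet G ({f | DWRel G e₁ f} ∪ {f | DWRel G e₂ f}) := by
  constructor
  · rintro f (hf | hf) <;> exact hf.2.1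
  · intro a b p hgeo f₁ hf₁ f₂ hf₂ f₃ hf₃ hp₁ hp₂ hp₃
    -- two edges of the same Θ-class on a common geodesic coincide
    have same : ∀ {e f g : Sym2 V}, DWRel G e f → DWRel G e g →
        f ∈ p.edges → g ∈ p.edges → f = g := by
      intro e f g hef heg hfp hgp
      by_contra hfg
      exact not_dwRel_of_geodesic hconn hgeo hfp hgp hfg (htrans hef.symm' heg)
    rcases hf₁ with h₁ | h₁ <;> rcases hf₂ with h₂ | h₂ <;> rcases hf₃ with h₃ | h₃
    · exact Or.inl (same h₁ h₂ hp₁ hp₂)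
    · exact Or.inl (same h₁ h₂ hp₁ hp₂)
    · exact Or.inr (Or.inl (same h₁ h₃ hp₁ hp₃))
    · exact Or.inr (Or.inr (same h₂ h₃ hp₂ hp₃))
    · exact Or.inr (Or.inr (same h₂ h₃ hp₂ hp₃))
    · exact Or.inr (Or.inl (same h₁ h₃ hp₁ hp₃))
    · exact Or.inl (same h₁ h₂ hp₁ hp₂)
    · exact Or.inl (same h₁ h₂ hp₁ hp₂)
end

section
/- If r ≥ 2, then the r-dimensional hypercube Q_r admits an isometric path edge cover consisting of 2^{r-1} geodesics; consequently ip_e(Q_r) ≤ 2^{r-1}. -/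
open SimpleGraph

/-- The `r`-dimensional hypercube: vertices are functions `Fin r → Bool`, two vertices
are adjacent iff they differ in exactly one coordinate. -/
def hypercube (r : ℕ) : SimpleGraph (Fin r → Bool) where
  Adj x y := ∃! i, x i ≠ y i
  symm := by
    constructor
    rintro x y ⟨i, hi, hu⟩
    exact ⟨i, hi.symm, fun j hj => hu j hj.symm⟩
  loopless := by
    constructor
    rintro x ⟨i, hi, -⟩
    exact hi rfl

/-- An indexed family of `k` geodesics of `G` is an isometric path edge cover if every
edge of `G` lies on at least one of them. -/
def IsIsometricPathEdgeCover {V : Type*} (G : SimpleGraph V) (k : ℕ)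
    (u v : Fin k → V) (p : ∀ i, G.Walk (u i) (v i)) : Prop :=
  (∀ i, IsGeodesic G (p i)) ∧ ∀ e ∈ G.edgeSet, ∃ i, e ∈ (p i).edges

/-!
For every vertex `x` of `Q_r`, the walk that flips the coordinates `0, 1, …, r - 1` one after
another is a geodesic from `x` to its antipode, since its length `r` is the Hamming distance of
its ends. The edge joining `a` to `a` with coordinate `j` flipped is traversed, when coordinate
`j` is flipped, by the walk started at `a` with its first `j` coordinates flipped. The two start
points obtained in this way from the two ends of an edge differ in exactly one coordinate, so one
of them has even weight; hence the `2 ^ (r - 1)` walks started at the vertices of even weight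
cover every edge.
-/

namespace Hypercube

variable {r : ℕ}

lemma adj_update_not (x : Fin r → Bool) (j : Fin r) :
    (hypercube r).Adj x (Function.update x j (!x j)) := by
  refine ⟨j, by simp, fun i hi => ?_⟩
  by_contra hij
  exact hi (Function.update_of_ne hij _ _).symm

lemma exists_eq_update_not_of_adj {x y : Fin r → Bool} (h : (hypercube r).Adj x y) :
    ∃ j, y = Function.update x j (!x j) := by
  obtain ⟨j, hj, huniq⟩ := h
  refine ⟨j, funext fun i => ?_⟩
  rcases eq_or_ne i j with rfl | hij
  · simpa using Bool.eq_not.2 (Ne.symm hj)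
  · rw [Function.update_of_ne hij]
    by_contra hne
    exact hij (huniq i fun h => hne h.symm)

lemma hammingDist_le_one_of_adj {x y : Fin r → Bool} (h : (hypercube r).Adj x y) :
    hammingDist x y ≤ 1 := by
  obtain ⟨j, -, huniq⟩ := h
  refine Finset.card_le_one.2 fun a ha b hb => ?_
  simp only [Finset.mem_filter, Finset.mem_univ, true_and] at ha hb
  rw [huniq a ha, huniq b hb]

lemma hammingDist_le_length {x y : Fin r → Bool} (p : (hypercube r).Walk x y) :
    hammingDist x y ≤ p.length := by
  induction p with
  | nil => simp
  | cons h p ih =>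
    calc _ ≤ _ := hammingDist_triangle _ _ _
      _ ≤ 1 + p.length := add_le_add (hammingDist_le_one_of_adj h) ih
      _ = _ := by rw [SimpleGraph.Walk.length_cons, add_comm]

lemma isGeodesic_of_length_le_hammingDist {x y : Fin r → Bool} (p : (hypercube r).Walk x y)
    (h : p.length ≤ hammingDist x y) : IsGeodesic (hypercube r) p := by
  obtain ⟨q, hq⟩ := p.reachable.exists_walk_length_eq_dist
  exact le_antisymm (h.trans (hq ▸ hammingDist_le_length q)) (SimpleGraph.dist_le p)

def flipBelow (x : Fin r → Bool) (k : ℕ) : Fin r → Bool :=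
  fun i => if (i : ℕ) < k then !x i else x i

lemma flipBelow_zero (x : Fin r → Bool) : flipBelow x 0 = x := by
  funext i
  simp [flipBelow]

lemma flipBelow_flipBelow (x : Fin r → Bool) (k : ℕ) : flipBelow (flipBelow x k) k = x := by
  funext i
  by_cases h : (i : ℕ) < k <;> simp [flipBelow, h]

lemma flipBelow_succ (x : Fin r → Bool) {k : ℕ} (hk : k < r) :
    flipBelow x (k + 1) = Function.update (flipBelow x k) ⟨k, hk⟩ (!flipBelow x k ⟨k, hk⟩) := by
  funext i
  rcases lt_trichotomy (i : ℕ) k with h | h | h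
  · rw [Function.update_of_ne (Fin.ne_of_val_ne h.ne)]
    simp [flipBelow, h, Nat.lt_succ_of_lt h]
  · obtain rfl : i = ⟨k, hk⟩ := Fin.ext h
    simp [flipBelow]
  · rw [Function.update_of_ne (Fin.ne_of_val_ne h.ne')]
    simp [flipBelow, Nat.not_lt.2 h.le, Nat.not_lt.2 h]

def flipWalk (x : Fin r → Bool) : (k : ℕ) → k ≤ r → (hypercube r).Walk x (flipBelow x k)
  | 0, _ => SimpleGraph.Walk.nil.copy rfl (flipBelow_zero x).symm
  | k + 1, hk => (flipWalk x k (by omega)).concat <| by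
      simpa only [flipBelow_succ x hk] using adj_update_not (flipBelow x k) ⟨k, hk⟩

lemma length_flipWalk (x : Fin r → Bool) (k : ℕ) (hk : k ≤ r) : (flipWalk x k hk).length = k := by
  induction k with
  | zero => simp [flipWalk]
  | succ k ih => simp [flipWalk, ih]

lemma mem_edges_flipWalk (x : Fin r → Bool) {j k : ℕ} (hjk : j < k) (hk : k ≤ r) :
    s(flipBelow x j, flipBelow x (j + 1)) ∈ (flipWalk x k hk).edges := by
  induction k with
  | zero => omega
  | succ k ih =>
    rw [flipWalk, SimpleGraph.Walk.edges_concat, List.concat_eq_append, List.mem_append]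
    rcases Nat.lt_succ_iff_lt_or_eq.1 hjk with h | rfl
    · exact .inl (ih h _)
    · exact .inr (List.mem_singleton_self _)

lemma isGeodesic_flipWalk (x : Fin r → Bool) : IsGeodesic (hypercube r) (flipWalk x r le_rfl) := by
  refine isGeodesic_of_length_le_hammingDist _ ?_
  rw [length_flipWalk, hammingDist]
  simp [flipBelow]

def parity (x : Fin r → Bool) : ZMod 2 := ∑ i, ((x i).toNat : ZMod 2)

lemma parity_update_not (x : Fin r → Bool) (j : Fin r) :
    parity (Function.update x j (!x j)) = parity x + 1 := by
  have hsummand : (fun i => ((Function.update x j (!x j) i).toNat : ZMod 2)) =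
      Function.update (fun i => ((x i).toNat : ZMod 2)) j ((!x j).toNat) :=
    funext fun i => Function.apply_update (fun _ b => (b.toNat : ZMod 2)) x j (!x j) i
  rw [parity, parity, hsummand, Finset.sum_update_of_mem (Finset.mem_univ j),
    Finset.sum_eq_add_sum_sdiff_singleton_of_mem (Finset.mem_univ j)]
  generalize ∑ i ∈ Finset.univ \ {j}, ((x i).toNat : ZMod 2) = S
  cases x j <;> revert S <;> decide

lemma parity_flipBelow (x : Fin r → Bool) {k : ℕ} (hk : k ≤ r) :
    parity (flipBelow x k) = parity x + k := by
  induction k with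
  | zero => simp [flipBelow_zero]
  | succ k ih =>
    rw [flipBelow_succ x hk, parity_update_not, ih (by omega)]
    push_cast
    ring

lemma parity_snoc {n : ℕ} (y : Fin n → Bool) (b : Bool) :
    parity (Fin.snoc y b : Fin (n + 1) → Bool) = parity y + b.toNat := by
  simp [parity, Fin.sum_univ_castSucc]

lemma mem_edges_flipWalk_flipBelow (x : Fin r → Bool) (j : Fin r) :
    s(x, Function.update x j (!x j)) ∈ (flipWalk (flipBelow x j) r le_rfl).edges := by
  simpa only [flipBelow_succ _ j.isLt, flipBelow_flipBelow] using
    mem_edges_flipWalk (flipBelow x j) j.isLt le_rfl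

lemma exists_parity_eq_zero_mem_edges_flipWalk {e : Sym2 (Fin r → Bool)}
    (he : e ∈ (hypercube r).edgeSet) : ∃ x, parity x = 0 ∧ e ∈ (flipWalk x r le_rfl).edges := by
  induction e using Sym2.ind with
  | h a b =>
    obtain ⟨j, rfl⟩ := exists_eq_update_not_of_adj ((SimpleGraph.mem_edgeSet _).1 he)
    set b := Function.update a j (!a j)
    have hba : Function.update b j (!b j) = a := by simp [b]
    have hpar : parity (flipBelow b j) = parity (flipBelow a j) + 1 := by
      rw [parity_flipBelow _ j.isLt.le, parity_flipBelow _ j.isLt.le, parity_update_not]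
      ring
    obtain ha | hb : parity (flipBelow a j) = 0 ∨ parity (flipBelow b j) = 0 := by
      rw [hpar]
      generalize parity (flipBelow a j) = p
      revert p
      decide
    · exact ⟨_, ha, mem_edges_flipWalk_flipBelow a j⟩
    · refine ⟨_, hb, ?_⟩
      rw [Sym2.eq_swap, ← hba]
      exact mem_edges_flipWalk_flipBelow b j

lemma exists_parity_eq_zero_subset_range (n : ℕ) :
    ∃ f : Fin (2 ^ n) → Fin (n + 1) → Bool, {x | parity x = 0} ⊆ Set.range f := by
  let E : Fin (2 ^ n) ≃ (Fin n → Bool) := (Fintype.equivFinOfCardEq (by simp)).symm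
  refine ⟨fun i => Fin.snoc (E i) (decide (parity (E i) = 1)),
    fun x (hx : parity x = 0) => ⟨E.symm (Fin.init x), ?_⟩⟩
  have h := parity_snoc (Fin.init x) (x (Fin.last n))
  rw [Fin.snoc_init_self, hx] at h
  conv_rhs => rw [← Fin.snoc_init_self x]
  simp only [E.apply_symm_apply]
  congr 1
  generalize parity (Fin.init x) = p at h
  generalize x (Fin.last n) = b at h
  revert p b
  decide

end Hypercube

/-- If `r ≥ 2`, then the hypercube `Q_r` admits an isometric path edge cover consisting of
`2^(r-1)` geodesics; consequently `ip_e(Q_r) ≤ 2^(r-1)`. -/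
theorem hypercube_ipe_cover (r : ℕ) (hr : 2 ≤ r) :
    ∃ (u v : Fin (2 ^ (r - 1)) → (Fin r → Bool))
      (p : ∀ i, (hypercube r).Walk (u i) (v i)),
      IsIsometricPathEdgeCover (hypercube r) (2 ^ (r - 1)) u v p := by
  obtain ⟨n, rfl⟩ : ∃ n, r = n + 1 := ⟨r - 1, by omega⟩
  obtain ⟨f, hf⟩ := Hypercube.exists_parity_eq_zero_subset_range n
  refine ⟨f, fun i => Hypercube.flipBelow (f i) (n + 1),
    fun i => Hypercube.flipWalk (f i) (n + 1) le_rfl, fun i => Hypercube.isGeodesic_flipWalk _,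
    fun e he => ?_⟩
  obtain ⟨x, hx, hxe⟩ := Hypercube.exists_parity_eq_zero_mem_edges_flipWalk he
  obtain ⟨i, rfl⟩ := hf hx
  exact ⟨i, hxe⟩
end
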